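/- For every ε > 0 there exist a finite family 𝒪 of pairwise disjoint closed axis-parallel rectangles in ℝ² (obstacles) and points p, q, o ∈ ℝ² lying outside the interior of every obstacle with o ∈ B(p,q), such that σ₁(p,o) + σ₁(o,q) > (3 − ε)·σ₁(p,q), where σ₁ denotes the L1-geodesic distance amid the obstacles. That is, the factor 3 in the two-dimensional inequality σ₁(p,o) + σ₁(o,q) ≤ 3·σ₁(p,q) is tight. -/

import Mathlib

/-!
A thin wall `[-3/4, -1/4] × [-L, L]` stands between `p = (-1, 0)` and `o = (0, 0)`, while
`q = (1, L)` is reached from `p` by going up along `x = -1` and then right along the top of the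
wall, so `σ₁(p, q) ≤ L + 2`. Any path from `p` to `o` crosses the line `x = -1/2` at height
`|y| ≥ L`, so `σ₁(p, o) ≥ 2L + 1`, and `σ₁(o, q) ≥ ‖q - o‖₁ = L + 1`. Hence
`σ₁(p, o) + σ₁(o, q) ≥ 3L + 2`, which beats `(3 - ε)(L + 2)` once `εL ≥ 4`.
-/

open scoped ENNReal

namespace GeoSpanner

/-- Points of `ℝ^d`. -/
abbrev Pt (d : ℕ) := Fin d → ℝ

/-- The L1 norm `‖x‖₁ = ∑ |xᵢ|`. -/
def nrm1 {d : ℕ} (x : Pt d) : ℝ := ∑ i, |x i|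

/-- The Euclidean (L2) norm. -/
noncomputable def nrm2 {d : ℕ} (x : Pt d) : ℝ := Real.sqrt (∑ i, (x i) ^ 2)

/-- An axis-parallel box: a product of closed bounded intervals. -/
def IsBox {d : ℕ} (B : Set (Pt d)) : Prop := ∃ a b : Pt d, a ≤ b ∧ B = Set.Icc a b

/-- A valid family of obstacles: finitely many pairwise disjoint closed
axis-parallel boxes. -/
def IsObstacleFamily {d : ℕ} (O : Finset (Set (Pt d))) : Prop :=
  (∀ B ∈ O, IsBox B) ∧ (O : Set (Set (Pt d))).Pairwise Disjoint

/-- The free space: points outside the interior of every obstacle. -/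
def free {d : ℕ} (O : Finset (Set (Pt d))) : Set (Pt d) :=
  {x | ∀ B ∈ O, x ∉ interior B}

/-- Length of the path `γ` restricted to `[0,1]`, measured as total variation
with respect to the norm `nrm`. -/
noncomputable def pathLen {d : ℕ} (nrm : Pt d → ℝ) (γ : ℝ → Pt d) : ℝ≥0∞ :=
  ⨆ (n : ℕ) (t : Fin (n + 1) → ℝ)
    (_ : Monotone t ∧ ∀ i, t i ∈ Set.Icc (0 : ℝ) 1),
      ∑ i : Fin n, ENNReal.ofReal (nrm (γ (t i.succ) - γ (t i.castSucc)))

/-- `γ` is a continuous path from `p` to `q` staying inside the region `F`. -/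
def IsPathIn {d : ℕ} (F : Set (Pt d)) (p q : Pt d) (γ : ℝ → Pt d) : Prop :=
  ContinuousOn γ (Set.Icc 0 1) ∧ γ 0 = p ∧ γ 1 = q ∧
    ∀ t ∈ Set.Icc (0 : ℝ) 1, γ t ∈ F

/-- Geodesic distance from `p` to `q` inside the region `F`, with path lengths
measured with respect to the norm `nrm`. -/
noncomputable def geo {d : ℕ} (nrm : Pt d → ℝ) (F : Set (Pt d)) (p q : Pt d) : ℝ≥0∞ :=
  ⨅ (γ : ℝ → Pt d) (_ : IsPathIn F p q γ), pathLen nrm γ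

/-- `B(p,q)`: the closed axis-parallel box with opposite corners `p` and `q`. -/
def corners {d : ℕ} (p q : Pt d) : Set (Pt d) := Set.uIcc p q

/-- Graph distance over the edge set `E` with edge weights given by `σ`. -/
noncomputable def graphDist {d : ℕ} (σ : Pt d → Pt d → ℝ≥0∞) (E : Set (Sym2 (Pt d)))
    (p q : Pt d) : ℝ≥0∞ :=
  ⨅ (n : ℕ) (x : Fin (n + 1) → Pt d)
    (_ : x 0 = p ∧ x (Fin.last n) = q ∧ ∀ i : Fin n, s(x i.castSucc, x i.succ) ∈ E),
      ∑ i : Fin n, σ (x i.castSucc) (x i.succ)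

end GeoSpanner

namespace GeoSpanner

open Set

lemma _root_.Fin.sum_succ_sub_castSucc {n : ℕ} (f : Fin (n + 1) → ℝ) :
    ∑ i : Fin n, (f i.succ - f i.castSucc) = f (Fin.last n) - f 0 := by
  induction n with
  | zero => simp
  | succ n ih =>
    rw [Fin.sum_univ_castSucc]
    have h := ih (fun i => f i.castSucc)
    simp only [Fin.succ_castSucc] at h ⊢
    rw [h, Fin.succ_last, Fin.castSucc_zero]
    ring

lemma mem_interior_Icc_iff {d : ℕ} {a b x : Pt d} :
    x ∈ interior (Icc a b) ↔ ∀ i, x i ∈ Ioo (a i) (b i) := by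
  rw [← pi_univ_Icc, interior_pi_set finite_univ]
  simp [mem_pi, interior_Icc]

lemma mem_free_singleton_Icc {d : ℕ} {a b x : Pt d} :
    x ∈ free {Icc a b} ↔ ∃ i, x i ∉ Ioo (a i) (b i) := by
  simp [free, mem_interior_Icc_iff]

lemma isObstacleFamily_singleton {d : ℕ} {B : Set (Pt d)} (hB : IsBox B) :
    IsObstacleFamily {B} :=
  ⟨by simpa using hB, by simp⟩

lemma nrm1_nonneg {d : ℕ} (v : Pt d) : 0 ≤ nrm1 v :=
  Finset.sum_nonneg fun _ _ => abs_nonneg _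

lemma nrm1_two (v : Pt 2) : nrm1 v = |v 0| + |v 1| := by
  simp [nrm1, Fin.sum_univ_two]

section LowerBound

variable {d : ℕ} {nrm : Pt d → ℝ}

lemma le_pathLen_of_mem_Icc (γ : ℝ → Pt d) {s : ℝ} (hs : s ∈ Icc (0 : ℝ) 1) :
    ENNReal.ofReal (nrm (γ s - γ 0) + nrm (γ 1 - γ s)) ≤ pathLen nrm γ := by
  have hmono : Monotone ![0, s, 1] := by
    rw [Fin.monotone_iff_le_succ]
    intro i
    fin_cases i <;> simp [hs.1, hs.2]
  have hmem : ∀ i, ![0, s, 1] i ∈ Icc (0 : ℝ) 1 := by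
    intro i
    fin_cases i <;> simp [hs.1, hs.2]
  calc ENNReal.ofReal (nrm (γ s - γ 0) + nrm (γ 1 - γ s))
      ≤ ENNReal.ofReal (nrm (γ s - γ 0)) + ENNReal.ofReal (nrm (γ 1 - γ s)) :=
        ENNReal.ofReal_add_le
    _ = ∑ i : Fin 2, ENNReal.ofReal (nrm (γ (![0, s, 1] i.succ) - γ (![0, s, 1] i.castSucc))) := by
        simp [Fin.sum_univ_two]
    _ ≤ pathLen nrm γ := le_iSup₂_of_le 2 ![0, s, 1] (le_iSup_of_le ⟨hmono, hmem⟩ le_rfl)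

lemma ofReal_le_geo_of_forall_path {F : Set (Pt d)} {p q : Pt d} {c : ℝ}
    (h : ∀ γ, IsPathIn F p q γ → ∃ s ∈ Icc (0 : ℝ) 1, c ≤ nrm (γ s - p) + nrm (q - γ s)) :
    ENNReal.ofReal c ≤ geo nrm F p q := by
  refine le_iInf₂ fun γ hγ => ?_
  obtain ⟨s, hs, hc⟩ := h γ hγ
  obtain ⟨-, h0, h1, -⟩ := hγ
  calc ENNReal.ofReal c ≤ ENNReal.ofReal (nrm (γ s - γ 0) + nrm (γ 1 - γ s)) := by
        rw [h0, h1]; exact ENNReal.ofReal_le_ofReal hc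
    _ ≤ pathLen nrm γ := le_pathLen_of_mem_Icc γ hs

end LowerBound

lemma ofReal_nrm1_sub_le_geo {d : ℕ} (F : Set (Pt d)) (p q : Pt d) :
    ENNReal.ofReal (nrm1 (q - p)) ≤ geo nrm1 F p q :=
  ofReal_le_geo_of_forall_path fun γ ⟨_, h0, _, _⟩ =>
    ⟨0, left_mem_Icc.mpr zero_le_one, by simp [h0, nrm1]⟩

lemma pathLen_nrm1_le_of_monotoneOn {d : ℕ} (γ : ℝ → Pt d)
    (hγ : ∀ i, MonotoneOn (fun t => γ t i) (Icc 0 1)) :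
    pathLen nrm1 γ ≤ ENNReal.ofReal (nrm1 (γ 1 - γ 0)) := by
  refine iSup₂_le fun n t => iSup_le fun ⟨ht, htI⟩ => ?_
  have h0 : (0 : ℝ) ∈ Icc (0 : ℝ) 1 := left_mem_Icc.mpr zero_le_one
  have h1 : (1 : ℝ) ∈ Icc (0 : ℝ) 1 := right_mem_Icc.mpr zero_le_one
  have hseg : ∀ k : Fin n, nrm1 (γ (t k.succ) - γ (t k.castSucc)) =
      ∑ i, (γ (t k.succ) i - γ (t k.castSucc) i) := fun k =>
    Finset.sum_congr rfl fun i _ => abs_of_nonneg <| sub_nonneg.mpr <|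
      hγ i (htI _) (htI _) (ht Fin.castSucc_lt_succ.le)
  rw [← ENNReal.ofReal_sum_of_nonneg fun k _ => nrm1_nonneg _]
  refine ENNReal.ofReal_le_ofReal ?_
  calc ∑ k : Fin n, nrm1 (γ (t k.succ) - γ (t k.castSucc))
      = ∑ i, (γ (t (Fin.last n)) i - γ (t 0) i) := by
        simp only [hseg]
        rw [Finset.sum_comm]
        exact Finset.sum_congr rfl fun i _ => Fin.sum_succ_sub_castSucc fun k => γ (t k) i
    _ ≤ ∑ i, (γ 1 i - γ 0 i) := Finset.sum_le_sum fun i _ => sub_le_sub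
        (hγ i (htI _) h1 (htI _).2) (hγ i h0 (htI _) (htI _).1)
    _ ≤ nrm1 (γ 1 - γ 0) := Finset.sum_le_sum fun i _ => le_abs_self _

lemma geo_nrm1_le_of_monotoneOn {d : ℕ} {F : Set (Pt d)} {p q : Pt d} {γ : ℝ → Pt d}
    (hγ : IsPathIn F p q γ) (hmono : ∀ i, MonotoneOn (fun t => γ t i) (Icc 0 1)) :
    geo nrm1 F p q ≤ ENNReal.ofReal (nrm1 (q - p)) := by
  calc geo nrm1 F p q ≤ pathLen nrm1 γ := iInf₂_le γ hγ
    _ ≤ ENNReal.ofReal (nrm1 (q - p)) := by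
        rw [← hγ.2.1, ← hγ.2.2.1]; exact pathLen_nrm1_le_of_monotoneOn γ hmono

section Wall

variable {L : ℝ}

def wall (L : ℝ) : Set (Pt 2) := Icc ![-3/4, -L] ![-1/4, L]

lemma isBox_wall (hL : 0 ≤ L) : IsBox (wall L) :=
  ⟨_, _, by norm_num [Pi.le_def, Fin.forall_fin_two]; linarith, rfl⟩

lemma mem_free_wall_iff {x : Pt 2} :
    x ∈ free {wall L} ↔ x 0 ∉ Ioo (-3/4) (-1/4) ∨ x 1 ∉ Ioo (-L) L := by
  simp [wall, mem_free_singleton_Icc, Fin.exists_fin_two]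

lemma geo_around_wall_le (hL : 0 ≤ L) :
    geo nrm1 (free {wall L}) ![-1, 0] ![1, L] ≤ ENNReal.ofReal (L + 2) := by
  set γ : ℝ → Pt 2 := fun t => ![-1 + 2 * max (2 * t - 1) 0, L * min (2 * t) 1]
  have hpath : IsPathIn (free {wall L}) ![-1, 0] ![1, L] γ := by
    refine ⟨?_, ?_, ?_, fun t _ => mem_free_wall_iff.mpr ?_⟩
    · fun_prop
    · ext i; fin_cases i <;> simp [γ]
    · ext i; fin_cases i <;> norm_num [γ]
    · rcases le_or_gt t (1/2) with ht | ht
      · left; norm_num [γ, max_eq_right (by linarith : 2 * t - 1 ≤ 0)]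
      · right; simp [γ, min_eq_right (by linarith : (1:ℝ) ≤ 2 * t)]
  have hmono : ∀ i, MonotoneOn (fun t => γ t i) (Icc 0 1) := by
    intro i
    refine Monotone.monotoneOn (fun s t hst => ?_) _
    fin_cases i <;> dsimp [γ] <;> gcongr
  calc geo nrm1 (free {wall L}) ![-1, 0] ![1, L]
      ≤ ENNReal.ofReal (nrm1 (![1, L] - ![-1, 0])) := geo_nrm1_le_of_monotoneOn hpath hmono
    _ = ENNReal.ofReal (L + 2) := by
        rw [nrm1_two]; norm_num [abs_of_nonneg hL, add_comm]

lemma le_geo_through_wall :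
    ENNReal.ofReal (2 * L + 1) ≤ geo nrm1 (free {wall L}) ![-1, 0] 0 := by
  refine ofReal_le_geo_of_forall_path fun γ ⟨hc, h0, h1, hfree⟩ => ?_
  obtain ⟨s, hs, hx⟩ : ∃ s ∈ Icc (0 : ℝ) 1, γ s 0 = -1/2 :=
    intermediate_value_Icc zero_le_one ((continuous_apply 0).comp_continuousOn hc)
      (by norm_num [h0, h1])
  have hy : L ≤ |γ s 1| := by
    refine le_of_not_gt fun hlt => ?_
    have hs_free := mem_free_wall_iff.mp (hfree s hs)
    rw [hx] at hs_free
    exact hs_free.elim (· ⟨by norm_num, by norm_num⟩) (· (abs_lt.mp hlt))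
  refine ⟨s, hs, ?_⟩
  have hp : nrm1 (γ s - ![-1, 0]) = 1/2 + |γ s 1| := by rw [nrm1_two]; norm_num [hx]
  have ho : nrm1 (0 - γ s) = 1/2 + |γ s 1| := by rw [nrm1_two]; norm_num [hx]
  linarith

end Wall

/-- the factor 3 in the two-dimensional inequality
σ₁(p,o) + σ₁(o,q) ≤ 3·σ₁(p,q) is tight. -/
theorem statement_6 (ε : ℝ) (hε : 0 < ε) :
    ∃ (O : Finset (Set (Pt 2))) (p q o : Pt 2),
      IsObstacleFamily O ∧
      p ∈ free O ∧ q ∈ free O ∧ o ∈ free O ∧ o ∈ corners p q ∧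
      ENNReal.ofReal (3 - ε) * geo nrm1 (free O) p q <
        geo nrm1 (free O) p o + geo nrm1 (free O) o q := by
  set L := 4 / ε
  have hL : 0 < L := by positivity
  have hεL : ε * L = 4 := mul_div_cancel₀ 4 hε.ne'
  refine ⟨{wall L}, ![-1, 0], ![1, L], 0, isObstacleFamily_singleton (isBox_wall hL.le),
    mem_free_wall_iff.mpr (.inl (by norm_num)), mem_free_wall_iff.mpr (.inl (by norm_num)),
    mem_free_wall_iff.mpr (.inl (by norm_num)), ?_, ?_⟩
  · simp [corners, uIcc, Pi.le_def, Fin.forall_fin_two, hL.le]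
  calc ENNReal.ofReal (3 - ε) * geo nrm1 (free {wall L}) ![-1, 0] ![1, L]
      ≤ ENNReal.ofReal (3 - ε) * ENNReal.ofReal (L + 2) := by
        gcongr; exact geo_around_wall_le hL.le
    _ = ENNReal.ofReal ((3 - ε) * (L + 2)) := (ENNReal.ofReal_mul' (by positivity)).symm
    _ < ENNReal.ofReal ((2 * L + 1) + (L + 1)) :=
        (ENNReal.ofReal_lt_ofReal_iff (by positivity)).mpr (by linarith)
    _ = ENNReal.ofReal (2 * L + 1) + ENNReal.ofReal (nrm1 (![1, L] - 0)) := by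
        rw [ENNReal.ofReal_add (by positivity) (by positivity), nrm1_two]
        norm_num [abs_of_pos hL, add_comm]
    _ ≤ geo nrm1 (free {wall L}) ![-1, 0] 0 + geo nrm1 (free {wall L}) 0 ![1, L] :=
        add_le_add le_geo_through_wall (ofReal_nrm1_sub_le_geo _ _ _)

end GeoSpanner
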